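/- arXiv:2003.06726 — 7 statements merged into one kernel-verified Lean document; each statement's English description precedes it below -/
import Mathlib

section
/- Let λ₀, s₀ : ℝ → ℝ and suppose y : ℝ → ℝ satisfies (Δ²y)(x) = λ₀(x)(Δy)(x) + s₀(x)y(x) for all real x. Then for every integer n ≥ 0 and all real x, (Δ^{n+2}y)(x) = λ_n(x)(Δy)(x) + s_n(x)y(x). -/
/-- Forward difference operator: `(Δ f)(x) = f(x+1) - f(x)`. -/
noncomputable def fd (f : ℝ → ℝ) : ℝ → ℝ := fun x => f (x + 1) - f x

/-- The DAIM sequences `(λ_n, s_n)` built from `(λ₀, s₀)`. -/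
noncomputable def daim (l0 s0 : ℝ → ℝ) : ℕ → (ℝ → ℝ) × (ℝ → ℝ)
  | 0 => (l0, s0)
  | n + 1 =>
      (fun x => fd (daim l0 s0 n).1 x + (daim l0 s0 n).1 (x + 1) * l0 x
          + (daim l0 s0 n).2 (x + 1),
       fun x => fd (daim l0 s0 n).2 x + (daim l0 s0 n).1 (x + 1) * s0 x)

theorem stmt_0 (l0 s0 : ℝ → ℝ) (y : ℝ → ℝ)
    (hy : ∀ x : ℝ, fd (fd y) x = l0 x * fd y x + s0 x * y x) :
    ∀ n : ℕ, ∀ x : ℝ,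
      fd^[n + 2] y x = (daim l0 s0 n).1 x * fd y x + (daim l0 s0 n).2 x * y x := by
  intro n
  induction n with
  | zero =>
    intro x
    simpa [daim, Function.iterate_succ_apply'] using hy x
  | succ n ih =>
    intro x
    have h1 : fd^[n + 3] y x = fd^[n + 2] y (x + 1) - fd^[n + 2] y x := by
      rw [show n + 3 = (n + 2) + 1 from rfl, Function.iterate_succ_apply']
      rfl
    have hfy : fd y (x + 1) = fd (fd y) x + fd y x := by simp [fd]
    have hyy : y (x + 1) = fd y x + y x := by simp [fd]
    rw [h1, ih x, ih (x + 1), hfy, hyy, hy x]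
    simp only [daim, fd]
    ring
end

section
/- Let λ₀, s₀ : ℝ → ℝ and fix n ≥ 1. Assume s_m(x) ≠ 0 for all real x and all m ≥ n−1. If δ_n(x) = 0 for all real x, then δ_m(x) = 0 for all real x and all m ≥ n. -/
/-- `δ_n(x) = λ_n(x) s_{n-1}(x) - λ_{n-1}(x) s_n(x)` (for `n ≥ 1`). -/
noncomputable def deltaDAIM (l0 s0 : ℝ → ℝ) (n : ℕ) (x : ℝ) : ℝ :=
  (daim l0 s0 n).1 x * (daim l0 s0 (n - 1)).2 x
    - (daim l0 s0 (n - 1)).1 x * (daim l0 s0 n).2 x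

/-- Abstract algebraic core of the inductive step. -/
lemma daim_key (a b e c d f l l' s s' : ℝ) (hc : c ≠ 0) (hd : d ≠ 0)
    (h1 : (b - a + b * l + d) * c - a * (d - c + b * s) = 0)
    (h2 : (e - b + e * l' + f) * d - b * (f - d + e * s') = 0) :
    ((e - b + e * l' + f) - (b - a + b * l + d) + (e - b + e * l' + f) * l
        + (f - d + e * s')) * (d - c + b * s)
      - (b - a + b * l + d) * ((f - d + e * s') - (d - c + b * s)
        + (e - b + e * l' + f) * s) = 0 := by
  set u : ℝ := d - c + b * s with hu
  set v : ℝ := f - d + e * s' with hv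
  have hG : c * d * (((e - b + e * l' + f) - (b - a + b * l + d) + (e - b + e * l' + f) * l
        + v) * u - (b - a + b * l + d) * (v - u + (e - b + e * l' + f) * s)) = 0 := by
    linear_combination (u * v - d * v - b * v * s) * h1
      + (c * u * (1 + l) - a * u * s - s * ((b - a + b * l + d) * c - a * u)) * h2
  have := mul_eq_zero.mp hG
  rcases this with h | h
  · exact absurd h (mul_ne_zero hc hd)
  · exact h

theorem stmt_1 (l0 s0 : ℝ → ℝ) (n : ℕ) (hn : 1 ≤ n)
    (hs : ∀ m : ℕ, n - 1 ≤ m → ∀ x : ℝ, (daim l0 s0 m).2 x ≠ 0)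
    (hδ : ∀ x : ℝ, deltaDAIM l0 s0 n x = 0) :
    ∀ m : ℕ, n ≤ m → ∀ x : ℝ, deltaDAIM l0 s0 m x = 0 := by
  intro m hm
  induction m, hm using Nat.le_induction with
  | base => exact hδ
  | succ m hm ih =>
    intro x
    obtain ⟨k, rfl⟩ : ∃ k, m = k + 1 := ⟨m - 1, (Nat.succ_pred_eq_of_pos (hn.trans hm)).symm⟩
    have hsk : ∀ y : ℝ, (daim l0 s0 k).2 y ≠ 0 := hs k (by omega)
    have h1 := ih x
    have h2 := ih (x + 1)
    simp only [deltaDAIM, daim, fd, Nat.add_sub_cancel] at h1 h2 ⊢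
    have key := daim_key ((daim l0 s0 k).1 x) ((daim l0 s0 k).1 (x + 1))
      ((daim l0 s0 k).1 (x + 1 + 1)) ((daim l0 s0 k).2 x) ((daim l0 s0 k).2 (x + 1))
      ((daim l0 s0 k).2 (x + 1 + 1)) (l0 x) (l0 (x + 1)) (s0 x) (s0 (x + 1))
      (hsk x) (hsk (x + 1)) (by linear_combination h1) (by linear_combination h2)
    linear_combination key
end

section
/- Let λ₀, s₀ : ℝ → ℝ and suppose y : ℝ → ℝ satisfies (Δ²y)(x) = λ₀(x)(Δy)(x) + s₀(x)y(x) for all real x. Then for every n ≥ 1 and all real x, s_n(x)(Δ^{n+1}y)(x) − s_{n−1}(x)(Δ^{n+2}y)(x) = (s_n(x)λ_{n−1}(x) − s_{n−1}(x)λ_n(x)) (Δy)(x). -/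
lemma daim_key_s4 (l0 s0 : ℝ → ℝ) (y : ℝ → ℝ)
    (hy : ∀ x : ℝ, fd (fd y) x = l0 x * fd y x + s0 x * y x) :
    ∀ k : ℕ, ∀ x : ℝ,
      fd^[k + 2] y x = (daim l0 s0 k).1 x * fd y x + (daim l0 s0 k).2 x * y x := by
  intro k
  induction k with
  | zero =>
      intro x
      simpa [daim] using hy x
  | succ k ih =>
      intro x
      have h1 : fd^[k + 3] y x = fd^[k + 2] y (x + 1) - fd^[k + 2] y x := by
        rw [Function.iterate_succ_apply']; rfl
      have h2 := ih x
      have h3 := ih (x + 1)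
      have hyy : fd y (x + 1) = fd y x + (l0 x * fd y x + s0 x * y x) := by
        have := hy x
        simp only [fd] at this ⊢
        linarith
      have hy2 : y (x + 1) = y x + fd y x := by simp [fd]
      have : (k + 1) + 2 = k + 3 := rfl
      rw [this, h1, h3, h2, hyy, hy2]
      simp only [daim, fd]
      ring

theorem stmt_4 (l0 s0 : ℝ → ℝ) (y : ℝ → ℝ)
    (hy : ∀ x : ℝ, fd (fd y) x = l0 x * fd y x + s0 x * y x) :
    ∀ n : ℕ, 1 ≤ n → ∀ x : ℝ,
      (daim l0 s0 n).2 x * fd^[n + 1] y x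
          - (daim l0 s0 (n - 1)).2 x * fd^[n + 2] y x
        = ((daim l0 s0 n).2 x * (daim l0 s0 (n - 1)).1 x
            - (daim l0 s0 (n - 1)).2 x * (daim l0 s0 n).1 x) * fd y x := by
  intro n hn x
  obtain ⟨m, rfl⟩ := Nat.exists_eq_add_of_le hn
  have e1 : 1 + m - 1 = m := by omega
  have e2 : 1 + m + 1 = m + 2 := by omega
  have e3 : 1 + m + 2 = (m + 1) + 2 := by omega
  rw [e1, e2, e3, daim_key_s4 l0 s0 y hy m x, daim_key_s4 l0 s0 y hy (m + 1) x]
  have e4 : 1 + m = m + 1 := by omega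
  rw [e4]
  ring
end

section
/- Let a ∈ ℝ, n ≥ 0, and let y be a real polynomial function of degree exactly n satisfying x(x+1)(Δ²y)(x) = 2(a−1)x(Δy)(x) + a(1−a)y(x) for all real x. Then a = n or a = n+1. -/
open Polynomial in
lemma taylor_coeff_top (r : ℝ) (m : ℕ) (Q : Polynomial ℝ) (hQ : Q.natDegree ≤ m) :
    (taylor r Q).coeff m = Q.coeff m := by
  rw [taylor_coeff]
  rw [Polynomial.eval_eq_sum_range' (n := 1)
    (lt_of_le_of_lt (natDegree_hasseDeriv_le Q m) (by omega))]
  simp [hasseDeriv_coeff]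

open Polynomial in
lemma taylor_coeff_subtop (r : ℝ) (m : ℕ) (Q : Polynomial ℝ) (hQ : Q.natDegree ≤ m + 1) :
    (taylor r Q).coeff m = Q.coeff m + (m + 1) * r * Q.coeff (m + 1) := by
  rw [taylor_coeff]
  rw [Polynomial.eval_eq_sum_range' (n := 2)
    (lt_of_le_of_lt (natDegree_hasseDeriv_le Q m) (by omega))]
  simp [Finset.sum_range_succ, hasseDeriv_coeff, Nat.add_comm 1 m, Nat.choose_succ_self_right]
  ring

theorem stmt_8 (a : ℝ) (n : ℕ) (y : ℝ → ℝ) (P : Polynomial ℝ)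
    (hyP : ∀ x : ℝ, y x = P.eval x) (hdeg : P.natDegree = n) (hP : P ≠ 0)
    (hy : ∀ x : ℝ, x * (x + 1) * fd (fd y) x
        = 2 * (a - 1) * x * fd y x + a * (1 - a) * y x) :
    a = n ∨ a = n + 1 := by
  classical
  open Polynomial in
  set D1 : Polynomial ℝ := taylor 1 P - P with hD1def
  open Polynomial in
  set D2 : Polynomial ℝ := taylor 1 D1 - D1 with hD2def
  have hc : P.coeff n ≠ 0 := by
    rw [← hdeg]
    exact Polynomial.leadingCoeff_ne_zero.mpr hP
  have hfd : ∀ x : ℝ, fd y x = D1.eval x := by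
    intro x
    simp [fd, hyP, hD1def, Polynomial.taylor_eval]
  have hfd2 : ∀ x : ℝ, fd (fd y) x = D2.eval x := by
    intro x
    rw [show fd (fd y) x = fd y (x + 1) - fd y x from rfl, hfd, hfd]
    simp [hD2def, Polynomial.taylor_eval]
  have hE : (Polynomial.X ^ 2 + Polynomial.X) * D2
      = Polynomial.C (2 * (a - 1)) * Polynomial.X * D1
        + Polynomial.C (a * (1 - a)) * P := by
    apply Polynomial.funext
    intro x
    have h := hy x
    rw [hfd2 x, hfd x, hyP x] at h
    simp only [Polynomial.eval_add, Polynomial.eval_mul, Polynomial.eval_pow,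
      Polynomial.eval_X, Polynomial.eval_C]
    linear_combination h
  rcases n with _ | (_ | m)
  · -- n = 0
    have h0 := congrArg (fun p => Polynomial.coeff p 0) hE
    simp only [Polynomial.mul_coeff_zero, Polynomial.coeff_add, Polynomial.coeff_X_pow,
      Polynomial.coeff_X_zero, Polynomial.coeff_C_zero] at h0
    norm_num at h0
    rcases h0 with (h | h) | h
    · left; norm_num [h]
    · right; norm_num; linarith
    · exact absurd h hc
  · -- n = 1
    have hD1deg : D1.natDegree ≤ 0 := by
      rw [Polynomial.natDegree_le_iff_coeff_eq_zero]
      intro k hk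
      rw [hD1def, Polynomial.coeff_sub, taylor_coeff_top 1 k P (by omega), sub_self]
    have hD2z : D2.coeff 0 = 0 := by
      rw [hD2def, Polynomial.coeff_sub, taylor_coeff_top 1 0 D1 hD1deg, sub_self]
    have hD1c : D1.coeff 0 = P.coeff 1 := by
      rw [hD1def, Polynomial.coeff_sub, taylor_coeff_subtop 1 0 P (by omega)]
      ring
    have h1 := congrArg (fun p => Polynomial.coeff p 1) hE
    simp only [mul_assoc, Polynomial.coeff_add, Polynomial.coeff_C_mul, add_mul] at h1
    have e1 : (Polynomial.X ^ 2 * D2).coeff 1 = 0 := by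
      rw [Polynomial.X_pow_mul, Polynomial.coeff_mul_X_pow']
      norm_num
    have e2 : (Polynomial.X * D2).coeff 1 = D2.coeff 0 := Polynomial.coeff_X_mul D2 0
    have e3 : (Polynomial.X * D1).coeff 1 = D1.coeff 0 := Polynomial.coeff_X_mul D1 0
    rw [e1, e2, e3, hD2z, hD1c] at h1
    have key : (a - 1) * (a - 2) = 0 := by
      have hz : P.coeff 1 * ((a - 1) * (a - 2)) = 0 := by linear_combination h1
      rcases mul_eq_zero.mp hz with h | h
      · exact absurd h hc
      · exact h
    rcases mul_eq_zero.mp key with h | h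
    · left; push_cast; linarith
    · right; push_cast; linarith
  · -- n = m + 2
    have hD1deg : D1.natDegree ≤ m + 1 := by
      rw [Polynomial.natDegree_le_iff_coeff_eq_zero]
      intro k hk
      rw [hD1def, Polynomial.coeff_sub, taylor_coeff_top 1 k P (by omega), sub_self]
    have hD1c : D1.coeff (m + 1) = (m + 2) * P.coeff (m + 2) := by
      rw [hD1def, Polynomial.coeff_sub, taylor_coeff_subtop 1 (m + 1) P (by omega)]
      push_cast; ring
    have hD2top : D2.coeff (m + 1) = 0 := by
      rw [hD2def, Polynomial.coeff_sub, taylor_coeff_top 1 (m + 1) D1 hD1deg, sub_self]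
    have hD2c : D2.coeff m = (m + 1) * ((m + 2) * P.coeff (m + 2)) := by
      rw [hD2def, Polynomial.coeff_sub, taylor_coeff_subtop 1 m D1 hD1deg, hD1c]
      ring
    have h2 := congrArg (fun p => Polynomial.coeff p (m + 2)) hE
    simp only [mul_assoc, Polynomial.coeff_add, Polynomial.coeff_C_mul, add_mul] at h2
    have e1 : (Polynomial.X ^ 2 * D2).coeff (m + 2) = D2.coeff m := by
      rw [Polynomial.X_pow_mul, Polynomial.coeff_mul_X_pow' D2 2 (m + 2)]
      norm_num
    have e2 : (Polynomial.X * D2).coeff (m + 2) = D2.coeff (m + 1) := by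
      rw [show m + 2 = (m + 1) + 1 from rfl, Polynomial.coeff_X_mul]
    have e3 : (Polynomial.X * D1).coeff (m + 2) = D1.coeff (m + 1) := by
      rw [show m + 2 = (m + 1) + 1 from rfl, Polynomial.coeff_X_mul]
    rw [e1, e2, e3, hD2top, hD2c, hD1c] at h2
    set c := P.coeff (m + 2) with hcdef
    set N : ℝ := (m : ℝ) + 2 with hN
    have key : (a - N) * (a - (N + 1)) = 0 := by
      have hz : c * ((a - N) * (a - (N + 1))) = 0 := by
        rw [hN]; linear_combination h2
      rcases mul_eq_zero.mp hz with h | h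
      · exact absurd h hc
      · exact h
    rcases mul_eq_zero.mp key with h | h
    · left; push_cast; rw [hN] at h; push_cast at h; linarith
    · right; push_cast; rw [hN] at h; push_cast at h; linarith
end

section
/- Fix a ∈ ℝ and set λ₀(x) = 2(a−1)/(1+x) and s₀(x) = a(1−a)/(x(1+x)). Then for every n ≥ 0 and every real x with x + k ≠ 0 for all integers 0 ≤ k ≤ n+1, the DAIM sequences satisfy λ_n(x) = (n+2)·∏_{k=0}^{n}(a−k−1) / ∏_{k=0}^{n}(x+k+1) and s_n(x) = −(n+1)·a·∏_{k=0}^{n}(a−k−1) / ∏_{k=0}^{n+1}(x+k). -/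
theorem stmt_9 (a : ℝ) (l0 s0 : ℝ → ℝ)
    (hl0 : l0 = fun x => 2 * (a - 1) / (1 + x))
    (hs0 : s0 = fun x => a * (1 - a) / (x * (1 + x))) :
    ∀ n : ℕ, ∀ x : ℝ, (∀ k : ℕ, k ≤ n + 1 → x + k ≠ 0) →
      (daim l0 s0 n).1 x
          = (n + 2) * (∏ k ∈ Finset.range (n + 1), (a - k - 1))
              / ∏ k ∈ Finset.range (n + 1), (x + k + 1) ∧
        (daim l0 s0 n).2 x
          = -((n + 1) * a * ∏ k ∈ Finset.range (n + 1), (a - k - 1))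
              / ∏ k ∈ Finset.range (n + 2), (x + k) := by
  subst hl0 hs0
  intro n
  induction n with
  | zero =>
    intro x hx
    have h0 : x ≠ 0 := by simpa using hx 0 (by norm_num)
    have h1 : x + 1 ≠ 0 := by simpa using hx 1 (by norm_num)
    have h1' : (1 : ℝ) + x ≠ 0 := by rw [add_comm]; exact h1
    simp only [daim, Finset.prod_range_succ, Finset.prod_range_zero]
    norm_num
    constructor
    · field_simp [h1']
      ring_nf
    · field_simp [h0, h1']
      ring
  | succ n ih =>
    intro x hx
    have h0 : x ≠ 0 := by simpa using hx 0 (by norm_num)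
    have h1 : x + 1 ≠ 0 := by simpa using hx 1 (by norm_num)
    have h1' : (1 : ℝ) + x ≠ 0 := by rw [add_comm]; exact h1
    have hn2 : x + (n : ℝ) + 2 ≠ 0 := by
      have := hx (n + 2) le_rfl
      push_cast at this
      intro h; exact this (by linarith)
    have hx' : ∀ k : ℕ, k ≤ n + 1 → x + k ≠ 0 := fun k hk => hx k (by omega)
    have hx1' : ∀ k : ℕ, k ≤ n + 1 → (x + 1) + k ≠ 0 := by
      intro k hk
      have := hx (k + 1) (by omega)
      push_cast at this
      intro h
      exact this (by linarith)
    obtain ⟨hL, hS⟩ := ih x hx'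
    obtain ⟨hL1, hS1⟩ := ih (x + 1) hx1'
    set t : ℝ := ∏ k ∈ Finset.range n, (x + k + 2) with ht
    set P : ℝ := ∏ k ∈ Finset.range (n + 1), (a - k - 1) with hP
    have htne : t ≠ 0 := by
      rw [ht]
      apply Finset.prod_ne_zero_iff.mpr
      intro k hk
      have := hx (k + 2) (by simp at hk; omega)
      push_cast at this
      intro h
      exact this (by linarith)
    have e1 : ∏ k ∈ Finset.range (n + 1), (x + k + 1) = (x + 1) * t := by
      rw [Finset.prod_range_succ',
        Finset.prod_congr rfl
          (fun k _ => show x + ((k + 1 : ℕ) : ℝ) + 1 = x + k + 2 by push_cast; ring),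
        ← ht]
      push_cast
      ring
    have e2 : ∏ k ∈ Finset.range (n + 1), ((x + 1) + k + 1) = t * (x + (n : ℝ) + 2) := by
      rw [Finset.prod_range_succ,
        Finset.prod_congr rfl
          (fun (k : ℕ) _ => show x + 1 + (k : ℝ) + 1 = x + k + 2 by ring),
        ← ht]
      ring
    have e3 : ∏ k ∈ Finset.range (n + 2), (x + k) = x * ((x + 1) * t) := by
      rw [Finset.prod_range_succ',
        Finset.prod_congr rfl
          (fun k _ => show x + ((k + 1 : ℕ) : ℝ) = x + k + 1 by push_cast; ring),
        e1]
      push_cast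
      ring
    have e4 : ∏ k ∈ Finset.range (n + 2), ((x + 1) + k) = (x + 1) * (t * (x + (n : ℝ) + 2)) := by
      rw [Finset.prod_range_succ',
        Finset.prod_congr rfl
          (fun k _ => show x + 1 + ((k + 1 : ℕ) : ℝ) = (x + 1) + k + 1 by push_cast; ring),
        e2]
      push_cast
      ring
    have e6 : ∏ k ∈ Finset.range (n + 2), (x + k + 1) = (x + 1) * t * (x + (n : ℝ) + 2) := by
      rw [Finset.prod_range_succ, e1]
      push_cast
      ring
    have e5 : ∏ k ∈ Finset.range (n + 3), (x + k) = x * ((x + 1) * t * (x + (n : ℝ) + 2)) := by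
      rw [Finset.prod_range_succ',
        Finset.prod_congr rfl
          (fun k _ => show x + ((k + 1 : ℕ) : ℝ) = x + k + 1 by push_cast; ring),
        e6]
      push_cast
      ring
    have eP : ∏ k ∈ Finset.range (n + 2), (a - k - 1) = P * (a - (n : ℝ) - 2) := by
      rw [Finset.prod_range_succ, ← hP]
      push_cast
      ring
    constructor
    · show fd (daim _ _ n).1 x + (daim _ _ n).1 (x + 1) * _ + (daim _ _ n).2 (x + 1) = _
      rw [show ((n : ℕ) + 1 + 1 : ℕ) = n + 2 from rfl]
      simp only [fd]
      rw [hL, hS1, hL1, eP, e6, e1, e2, e4]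
      push_cast
      field_simp [h0, h1, h1', htne, hn2]
      ring
    · show fd (daim _ _ n).2 x + (daim _ _ n).1 (x + 1) * _ = _
      simp only [fd]
      rw [hS, hS1, hL1, eP, e5, e3, e2, e4]
      push_cast
      field_simp [h0, h1, h1', htne, hn2]
      ring
end

section
/- Fix a ∈ ℝ and set λ₀(x) = 2(a−1)/(1+x) and s₀(x) = a(1−a)/(x(1+x)). Then for every n ≥ 1 and every real x with x + k ≠ 0 for all integers 0 ≤ k ≤ n+1, δ_n(x) = − a·(1−a)_n·(1−a)_{n+1} / ((x)_{n+1}·(x+1)_{n+1}). -/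
/-- Rising factorial `(t)_m = t (t+1) ⋯ (t+m-1)`, with `(t)_0 = 1`. -/
noncomputable def risingFac (t : ℝ) (m : ℕ) : ℝ := ∏ j ∈ Finset.range m, (t + j)

lemma risingFac_succ (t : ℝ) (m : ℕ) : risingFac t (m + 1) = risingFac t m * (t + m) :=
  Finset.prod_range_succ _ _

lemma risingFac_succ' (t : ℝ) (m : ℕ) : risingFac t (m + 1) = t * risingFac (t + 1) m := by
  rw [risingFac, Finset.prod_range_succ', mul_comm]
  simp only [risingFac, Nat.cast_add, Nat.cast_one, Nat.cast_zero, add_zero, add_right_comm,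
    add_assoc]

lemma risingFac_ne_zero_iff {t : ℝ} {m : ℕ} :
    risingFac t m ≠ 0 ↔ ∀ k : ℕ, k < m → t + k ≠ 0 := by
  simp [risingFac, Finset.prod_ne_zero_iff]

lemma risingFac_add_three (t : ℝ) (m : ℕ) :
    risingFac t (m + 3) = t * (t + 1) * risingFac (t + 1 + 1) m * (t + 1 + 1 + m) := by
  rw [risingFac_succ', risingFac_succ', risingFac_succ]
  ring

lemma ne_zero_of_risingFac_add_three_ne_zero {t : ℝ} {m : ℕ} (h : risingFac t (m + 3) ≠ 0) :
    t ≠ 0 ∧ t + 1 ≠ 0 ∧ risingFac (t + 1 + 1) m ≠ 0 ∧ t + 1 + 1 + m ≠ 0 := by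
  simpa only [risingFac_add_three, mul_ne_zero_iff, and_assoc] using h

noncomputable def daimLambda (a : ℝ) (n : ℕ) (x : ℝ) : ℝ :=
  (-1) ^ (n + 1) * (n + 2) * (n + 1 - a) * risingFac (1 - a) n / risingFac (x + 1) (n + 1)

noncomputable def daimS (a : ℝ) (n : ℕ) (x : ℝ) : ℝ :=
  (-1) ^ n * (n + 1) * a * (n + 1 - a) * risingFac (1 - a) n / risingFac x (n + 2)

lemma daimLambda_succ {a x : ℝ} {n : ℕ} (hx : risingFac x (n + 3) ≠ 0) :
    daimLambda a (n + 1) x = fd (daimLambda a n) x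
      + daimLambda a n (x + 1) * (2 * (a - 1) / (1 + x)) + daimS a n (x + 1) := by
  obtain ⟨hx0, hx1, hR, hxn⟩ := ne_zero_of_risingFac_add_three_ne_zero hx
  simp only [daimLambda, daimS, fd, risingFac_succ (x + 1 + 1) n, risingFac_succ (1 - a) n,
    risingFac_succ' (x + 1), Nat.cast_add, Nat.cast_one, pow_succ]
  have h1x : 1 + x ≠ 0 := by rwa [add_comm]
  field_simp
  ring

lemma daimS_succ {a x : ℝ} {n : ℕ} (hx : risingFac x (n + 3) ≠ 0) :
    daimS a (n + 1) x
      = fd (daimS a n) x + daimLambda a n (x + 1) * (a * (1 - a) / (x * (1 + x))) := by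
  obtain ⟨hx0, hx1, hR, hxn⟩ := ne_zero_of_risingFac_add_three_ne_zero hx
  simp only [daimLambda, daimS, fd, risingFac_succ (x + 1 + 1) n, risingFac_succ (1 - a) n,
    risingFac_succ' x, risingFac_succ' (x + 1), Nat.cast_add, Nat.cast_one, pow_succ]
  have h1x : 1 + x ≠ 0 := by rwa [add_comm]
  field_simp
  ring

lemma daim_eq_daimLambda_daimS (a : ℝ) (n : ℕ) {x : ℝ} (hx : risingFac x (n + 2) ≠ 0) :
    (daim (fun x => 2 * (a - 1) / (1 + x)) (fun x => a * (1 - a) / (x * (1 + x))) n).1 x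
        = daimLambda a n x ∧
      (daim (fun x => 2 * (a - 1) / (1 + x)) (fun x => a * (1 - a) / (x * (1 + x))) n).2 x
        = daimS a n x := by
  induction n generalizing x with
  | zero =>
    obtain ⟨hx0, hx1⟩ : x ≠ 0 ∧ x + 1 ≠ 0 := by
      simpa [risingFac, Finset.prod_range_succ] using hx
    have h1x : 1 + x ≠ 0 := by rwa [add_comm]
    simp only [daim, daimLambda, daimS, risingFac, Finset.prod_range_succ, Finset.prod_range_zero,
      CharP.cast_eq_zero, Nat.cast_one, zero_add, add_zero, one_mul, pow_one]
    constructor <;> field_simp <;> ring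
  | succ n ih =>
    have hx' : risingFac x (n + 2) ≠ 0 := by
      rw [risingFac_succ] at hx; exact left_ne_zero_of_mul hx
    have hx1 : risingFac (x + 1) (n + 2) ≠ 0 := by
      rw [risingFac_succ'] at hx; exact right_ne_zero_of_mul hx
    obtain ⟨hl, hs⟩ := ih hx'
    obtain ⟨hl1, hs1⟩ := ih hx1
    refine ⟨?_, ?_⟩
    · rw [daimLambda_succ hx]
      simp only [daim, fd, hl, hl1, hs1]
    · rw [daimS_succ hx]
      simp only [daim, fd, hs, hl1, hs1]

lemma daimLambda_mul_daimS_sub {a x : ℝ} {n : ℕ} (hx : risingFac x (n + 3) ≠ 0) :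
    daimLambda a (n + 1) x * daimS a n x - daimLambda a n x * daimS a (n + 1) x
      = -(a * risingFac (1 - a) (n + 1) * risingFac (1 - a) (n + 2))
          / (risingFac x (n + 2) * risingFac (x + 1) (n + 2)) := by
  obtain ⟨hx0, hx1, hR, hxn⟩ := ne_zero_of_risingFac_add_three_ne_zero hx
  simp only [daimLambda, daimS, risingFac_succ (x + 1 + 1) n, risingFac_succ (1 - a),
    risingFac_succ' x, risingFac_succ' (x + 1), Nat.cast_add, Nat.cast_one, pow_succ]
  rcases neg_one_pow_eq_or ℝ n with h | h <;> simp only [h] <;> field_simp <;> ring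

theorem stmt_10 (a : ℝ) (l0 s0 : ℝ → ℝ)
    (hl0 : l0 = fun x => 2 * (a - 1) / (1 + x))
    (hs0 : s0 = fun x => a * (1 - a) / (x * (1 + x))) :
    ∀ n : ℕ, 1 ≤ n → ∀ x : ℝ, (∀ k : ℕ, k ≤ n + 1 → x + k ≠ 0) →
      deltaDAIM l0 s0 n x
        = -(a * risingFac (1 - a) n * risingFac (1 - a) (n + 1))
            / (risingFac x (n + 1) * risingFac (x + 1) (n + 1)) := by
  subst hl0 hs0
  rintro n hn x hx
  obtain ⟨m, rfl⟩ : ∃ m, n = m + 1 := ⟨n - 1, by omega⟩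
  have hx3 : risingFac x (m + 3) ≠ 0 :=
    risingFac_ne_zero_iff.2 fun k hk => hx k (by omega)
  have hx2 : risingFac x (m + 2) ≠ 0 :=
    risingFac_ne_zero_iff.2 fun k hk => hx k (by omega)
  obtain ⟨hl, hs⟩ := daim_eq_daimLambda_daimS a m hx2
  obtain ⟨hl', hs'⟩ := daim_eq_daimLambda_daimS a (m + 1) hx3
  rw [deltaDAIM, Nat.add_sub_cancel, hl, hs, hl', hs']
  exact daimLambda_mul_daimS_sub hx3
end

section
/- Fix q with 0 < q < 1 and an integer n ≥ 0, and define the polynomial S_n(x) = Σ_{k=0}^{n} [(q;q)_n / ((q;q)_k (q;q)_{n−k})]·(−1)^k·q^{k²}·x^k. Then for every real x, −x(1 − q^n)S_n(x) = x·S_n(qx) − (1+x)·S_n(x) + S_n(x/q). -/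
/-- The `q`-shifted factorial `(a;q)_m = ∏_{j=0}^{m-1} (1 - a q^j)`, with `(a;q)_0 = 1`. -/
noncomputable def qPoch (a q : ℝ) (m : ℕ) : ℝ := ∏ j ∈ Finset.range m, (1 - a * q ^ j)

lemma qPoch_pos (q : ℝ) (hq0 : 0 < q) (hq1 : q < 1) (m : ℕ) : 0 < qPoch q q m := by
  unfold qPoch
  apply Finset.prod_pos
  intro j _
  have h1 : q * q ^ j = q ^ (j + 1) := (pow_succ' q j).symm
  have h2 : q ^ (j + 1) < 1 := pow_lt_one₀ hq0.le hq1 (Nat.succ_ne_zero j)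
  rw [h1]; linarith

lemma qPoch_succ (q : ℝ) (m : ℕ) :
    qPoch q q (m + 1) = qPoch q q m * (1 - q ^ (m + 1)) := by
  unfold qPoch
  rw [Finset.prod_range_succ, pow_succ']

theorem stmt_17 (q : ℝ) (hq0 : 0 < q) (hq1 : q < 1) (n : ℕ)
    (S : ℝ → ℝ)
    (hS : S = fun x => ∑ k ∈ Finset.range (n + 1),
      qPoch q q n / (qPoch q q k * qPoch q q (n - k)) * (-1) ^ k * q ^ (k ^ 2) * x ^ k) :
    ∀ x : ℝ, -x * (1 - q ^ n) * S x = x * S (q * x) - (1 + x) * S x + S (x / q) := by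
  intro x
  subst hS
  simp only []
  set P : ℕ → ℝ := qPoch q q with hP
  have hPpos : ∀ m, 0 < P m := fun m => qPoch_pos q hq0 hq1 m
  have hPne : ∀ m, P m ≠ 0 := fun m => (hPpos m).ne'
  have hqne : q ≠ 0 := hq0.ne'
  -- key binomial recurrence
  have hC : ∀ k, k < n →
      P n / (P (k + 1) * P (n - (k + 1))) * (1 - q ^ (k + 1))
        = P n / (P k * P (n - k)) * (1 - q ^ (n - k)) := by
    intro k hk
    have h1 : P (k + 1) = P k * (1 - q ^ (k + 1)) := qPoch_succ q k
    have h2 : n - k = (n - (k + 1)) + 1 := by omega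
    have h3 : P (n - k) = P (n - (k + 1)) * (1 - q ^ (n - k)) := by
      have := qPoch_succ q (n - (k + 1))
      rw [h2]; exact this
    have hne1 : (1 - q ^ (k + 1)) ≠ 0 := by
      have : q ^ (k + 1) < 1 := pow_lt_one₀ hq0.le hq1 (Nat.succ_ne_zero k)
      linarith
    have hne2 : (1 - q ^ (n - k)) ≠ 0 := by
      have : q ^ (n - k) < 1 := pow_lt_one₀ hq0.le hq1 (by omega)
      linarith
    rw [h1, h3]
    field_simp [hPne k, hPne (n - (k + 1)), hne1, hne2]
  -- pointwise telescoping
  have hterm : ∀ k, k < n →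
      P n / (P k * P (n - k)) * (-1) ^ k * q ^ (k ^ 2) * ((q ^ k - q ^ n) * x ^ (k + 1))
      + P n / (P (k + 1) * P (n - (k + 1))) * (-1) ^ (k + 1) * q ^ ((k + 1) ^ 2)
          * (((q ^ (k + 1))⁻¹ - 1) * x ^ (k + 1)) = 0 := by
    intro k hk
    have hqn : q ^ n = q ^ k * q ^ (n - k) := by
      rw [← pow_add, Nat.add_sub_cancel' hk.le]
    have hsq : (k + 1) ^ 2 = (k ^ 2 + k) + (k + 1) := by ring
    have hinv : q ^ ((k + 1) ^ 2) * ((q ^ (k + 1))⁻¹ - 1)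
        = q ^ (k ^ 2 + k) * (1 - q ^ (k + 1)) := by
      rw [hsq, pow_add]
      field_simp
    rw [hqn]
    have := hC k hk
    generalize P n / (P (k + 1) * P (n - (k + 1))) = d2 at this ⊢
    generalize P n / (P k * P (n - k)) = d1 at this ⊢
    calc d1 * (-1) ^ k * q ^ (k ^ 2) * ((q ^ k - q ^ k * q ^ (n - k)) * x ^ (k + 1))
        + d2 * (-1) ^ (k + 1) * q ^ ((k + 1) ^ 2) * (((q ^ (k + 1))⁻¹ - 1) * x ^ (k + 1))
        = (-1) ^ k * q ^ (k ^ 2 + k) * x ^ (k + 1) * (d1 * (1 - q ^ (n - k)))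
          - (-1) ^ k * x ^ (k + 1) * (d2 * (q ^ ((k + 1) ^ 2) * ((q ^ (k + 1))⁻¹ - 1))) := by
          rw [pow_add, pow_succ]; ring
      _ = 0 := by
          rw [hinv]
          linear_combination ((-1) ^ k * q ^ (k ^ 2 + k) * x ^ (k + 1)) * this.symm
  -- the combined sum identity
  have hsum : ∑ k ∈ Finset.range (n + 1),
      (P n / (P k * P (n - k)) * (-1) ^ k * q ^ (k ^ 2) * ((q ^ k - q ^ n) * x ^ (k + 1))
       + P n / (P k * P (n - k)) * (-1) ^ k * q ^ (k ^ 2) * (((q ^ k)⁻¹ - 1) * x ^ k)) = 0 := by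
    rw [Finset.sum_add_distrib]
    rw [Finset.sum_range_succ]  -- peel last term of first sum
    rw [Finset.sum_range_succ']  -- peel first term of second sum
    have hlast : P n / (P n * P (n - n)) * (-1) ^ n * q ^ (n ^ 2)
        * ((q ^ n - q ^ n) * x ^ (n + 1)) = 0 := by ring
    have hfirst : P n / (P 0 * P (n - 0)) * (-1) ^ 0 * q ^ (0 ^ 2)
        * (((q ^ 0)⁻¹ - 1) * x ^ 0) = 0 := by norm_num
    rw [hlast, hfirst, add_zero, add_zero, ← Finset.sum_add_distrib]
    apply Finset.sum_eq_zero
    intro k hk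
    exact hterm k (Finset.mem_range.mp hk)
  -- expand the goal into the combined sum
  have expand :
      x * (∑ k ∈ Finset.range (n + 1),
        P n / (P k * P (n - k)) * (-1) ^ k * q ^ (k ^ 2) * (q * x) ^ k)
      - (1 + x) * (∑ k ∈ Finset.range (n + 1),
        P n / (P k * P (n - k)) * (-1) ^ k * q ^ (k ^ 2) * x ^ k)
      + (∑ k ∈ Finset.range (n + 1),
        P n / (P k * P (n - k)) * (-1) ^ k * q ^ (k ^ 2) * (x / q) ^ k)
      - (-x * (1 - q ^ n) * ∑ k ∈ Finset.range (n + 1),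
        P n / (P k * P (n - k)) * (-1) ^ k * q ^ (k ^ 2) * x ^ k)
      = ∑ k ∈ Finset.range (n + 1),
      (P n / (P k * P (n - k)) * (-1) ^ k * q ^ (k ^ 2) * ((q ^ k - q ^ n) * x ^ (k + 1))
       + P n / (P k * P (n - k)) * (-1) ^ k * q ^ (k ^ 2) * (((q ^ k)⁻¹ - 1) * x ^ k)) := by
    simp only [Finset.mul_sum, ← Finset.sum_sub_distrib, ← Finset.sum_add_distrib]
    apply Finset.sum_congr rfl
    intro k _
    rw [mul_pow, div_pow, div_eq_mul_inv]
    ring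
  rw [hsum] at expand
  linarith [expand]
end
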